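/- Let φ, φ* ∈ ℝ⁴ and x, w, r, r* ∈ ℝ. Then |φᵀ∇_r(x,w) - φ*ᵀ∇_{r*}(x,w)| ≤ √2 (1 + |x|)[‖φ‖ · I(|w - r| ≤ |r - r*|) + ‖φ - φ*‖], where ∇_r(x,w) = (I(w ≤ r), x·I(w ≤ r), I(w > r), x·I(w > r)). -/

import Mathlib

/-!
Write the difference as `⟪φ, ∇_r - ∇_{r*}⟫ + ⟪φ - φ*, ∇_{r*}⟫` and apply Cauchy–Schwarz to
each term. Always `‖∇_{r*}‖ = √(1 + x²) ≤ 1 + |x|`. The two regressors coincide unless `w`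
lies between `r` and `r*`, which forces `|w - r| ≤ |r - r*|`; in that case their difference is
`±(1, x, -1, -x)`, of norm `√2 · √(1 + x²)`.
-/

open scoped RealInnerProductSpace

lemma le_iff_le_of_abs_sub_lt_abs_sub {r rstar w : ℝ} (h : |r - rstar| < |w - r|) :
    w ≤ r ↔ w ≤ rstar := by
  constructor <;> intro <;> cases abs_cases (r - rstar) <;> cases abs_cases (w - r) <;> linarith

lemma sqrt_one_add_sq_le (x : ℝ) : √(1 + x ^ 2) ≤ 1 + |x| := by
  rw [Real.sqrt_le_iff]
  constructor
  · positivity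
  · nlinarith [sq_abs x, abs_nonneg x]

/-- The regressor vector ∇_r(x,w) = (I(w ≤ r), x·I(w ≤ r), I(w > r), x·I(w > r)) of the
two-regime threshold model, as an element of Euclidean ℝ⁴. -/
noncomputable def nabla (r x w : ℝ) : EuclideanSpace ℝ (Fin 4) :=
  (WithLp.equiv 2 (Fin 4 → ℝ)).symm
    ![if w ≤ r then (1 : ℝ) else 0, if w ≤ r then x else 0,
      if w ≤ r then 0 else 1, if w ≤ r then 0 else x]

lemma norm_nabla (r x w : ℝ) : ‖nabla r x w‖ = √(1 + x ^ 2) := by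
  rw [EuclideanSpace.norm_eq]
  by_cases h : w ≤ r <;> simp [nabla, Fin.sum_univ_four, h]

lemma nabla_congr {r rstar w : ℝ} (x : ℝ) (h : w ≤ r ↔ w ≤ rstar) :
    nabla r x w = nabla rstar x w := by
  simp only [nabla, h]

lemma norm_nabla_sub_nabla_of_le_of_lt {r rstar w : ℝ} (x : ℝ) (hr : w ≤ r) (hrstar : rstar < w) :
    ‖nabla r x w - nabla rstar x w‖ = √2 * √(1 + x ^ 2) := by
  rw [EuclideanSpace.norm_eq, ← Real.sqrt_mul zero_le_two]
  congr 1
  simp [nabla, Fin.sum_univ_four, hr, not_le.mpr hrstar]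
  ring

lemma norm_nabla_sub_nabla_le (r rstar x w : ℝ) :
    ‖nabla r x w - nabla rstar x w‖ ≤
      √2 * (1 + |x|) * (if |w - r| ≤ |r - rstar| then (1 : ℝ) else 0) := by
  split_ifs with hclose
  · rw [mul_one]
    have hbound : √2 * √(1 + x ^ 2) ≤ √2 * (1 + |x|) := by gcongr; exact sqrt_one_add_sq_le x
    rcases le_or_gt w r with hr | hr <;> rcases le_or_gt w rstar with hs | hs
    · rw [nabla_congr x (iff_of_true hr hs), sub_self, norm_zero]; positivity
    · rwa [norm_nabla_sub_nabla_of_le_of_lt x hr hs]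
    · rwa [norm_sub_rev, norm_nabla_sub_nabla_of_le_of_lt x hs hr]
    · rw [nabla_congr x (iff_of_false hr.not_ge hs.not_ge), sub_self, norm_zero]; positivity
  · rw [mul_zero, nabla_congr x (le_iff_le_of_abs_sub_lt_abs_sub (not_le.mp hclose)), sub_self,
      norm_zero]

theorem stmt10 (φ φstar : EuclideanSpace ℝ (Fin 4)) (x w r rstar : ℝ) :
    |⟪φ, nabla r x w⟫ - ⟪φstar, nabla rstar x w⟫| ≤
      Real.sqrt 2 * (1 + |x|) *
        (‖φ‖ * (if |w - r| ≤ |r - rstar| then (1 : ℝ) else 0) + ‖φ - φstar‖) := by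
  have hsplit : ⟪φ, nabla r x w⟫ - ⟪φstar, nabla rstar x w⟫ =
      ⟪φ, nabla r x w - nabla rstar x w⟫ + ⟪φ - φstar, nabla rstar x w⟫ := by
    rw [inner_sub_right, inner_sub_left]; ring
  have hnabla : ‖nabla rstar x w‖ ≤ √2 * (1 + |x|) := calc
    ‖nabla rstar x w‖ = √(1 + x ^ 2) := norm_nabla rstar x w
    _ ≤ 1 + |x| := sqrt_one_add_sq_le x
    _ ≤ √2 * (1 + |x|) := le_mul_of_one_le_left (by positivity) Real.one_lt_sqrt_two.le
  calc |⟪φ, nabla r x w⟫ - ⟪φstar, nabla rstar x w⟫|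
      ≤ ‖φ‖ * ‖nabla r x w - nabla rstar x w‖ + ‖φ - φstar‖ * ‖nabla rstar x w‖ := by
        rw [hsplit]
        exact (abs_add_le _ _).trans
          (add_le_add (abs_real_inner_le_norm _ _) (abs_real_inner_le_norm _ _))
    _ ≤ ‖φ‖ * (√2 * (1 + |x|) * (if |w - r| ≤ |r - rstar| then (1 : ℝ) else 0)) +
          ‖φ - φstar‖ * (√2 * (1 + |x|)) := by
        gcongr
        exact norm_nabla_sub_nabla_le r rstar x w
    _ = _ := by ring
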